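/- Let \(\sigma\) be \(1\)-Lipschitz with \(\sigma(0)=0\) applied entrywise, and for matrices \(A_1,\dots,A_L\) define the network \(F(\mathbf{X}) = A_L\sigma(A_{L-1}\cdots \sigma(A_1 \mathbf{X})\cdots)\). Let \(A'_1,\dots,A'_L\) be another tuple and denote by \(s_\ell\) upper bounds with \(\|A_\ell\|_s \le s_\ell\) and \(\|A'_\ell\|_s \le s_\ell\). If \(\|A_\ell F'_{\ell-1}(\mathbf{X}) - A'_\ell F'_{\ell-1}(\mathbf{X})\|_F \le \varepsilon_\ell\) at each layer (where \(F'_{\ell-1}\) denotes the first \(\ell-1\) layers with primed parameters), then \(\|F(\mathbf{X}) - F'(\mathbf{X})\|_F \le \sum_{\ell=1}^L \varepsilon_\ell \prod_{\ell'=\ell+1}^{L} s_{\ell'}\). -/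

import Mathlib

open scoped BigOperators

/-- The network forward pass: `fwd 0 = x` (the input) and
`fwd (ℓ+1) = A_ℓ (σ_ℓ (fwd ℓ))`; since `σ 0 = id` is assumed in the theorem below,
`fwd L = A_{L-1} σ(A_{L-2} ⋯ σ(A_0 x) ⋯)`. -/
def fwd (h : ℕ → ℕ)
    (σ : ∀ i : ℕ, EuclideanSpace ℝ (Fin (h i)) → EuclideanSpace ℝ (Fin (h i)))
    (A : ∀ ℓ : ℕ, EuclideanSpace ℝ (Fin (h ℓ)) →L[ℝ] EuclideanSpace ℝ (Fin (h (ℓ + 1))))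
    (x : EuclideanSpace ℝ (Fin (h 0))) : ∀ ℓ : ℕ, EuclideanSpace ℝ (Fin (h ℓ))
  | 0 => x
  | (ℓ + 1) => A ℓ (σ ℓ (fwd h σ A x ℓ))

/-! Peeling off one layer at a time, the error after layer `ℓ + 1` is at most `s_ℓ` times the error
after layer `ℓ` plus `ε_ℓ`: insert `A_ℓ σ(F'_ℓ)` between `A_ℓ σ(F_ℓ)` and `A'_ℓ σ(F'_ℓ)`, and use
that `A_ℓ σ` is `s_ℓ`-Lipschitz. Unrolling this linear recurrence from zero initial error gives
the sum of the `ε_ℓ`, each amplified by the spectral bounds of the later layers. -/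

theorem le_sum_mul_prod_Ico_of_le_mul_add {d s ε : ℕ → ℝ} {L : ℕ} (h0 : d 0 ≤ 0)
    (hstep : ∀ n < L, 0 ≤ s n ∧ d (n + 1) ≤ s n * d n + ε n) :
    d L ≤ ∑ ℓ ∈ Finset.range L, ε ℓ * ∏ ℓ' ∈ Finset.Ico (ℓ + 1) L, s ℓ' := by
  induction L with
  | zero => simpa using h0
  | succ L ih =>
    obtain ⟨hsL, hdL⟩ := hstep L L.lt_succ_self
    have ih := ih fun n hn => hstep n (hn.trans L.lt_succ_self)
    calc d (L + 1) ≤ s L * d L + ε L := hdL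
      _ ≤ s L * ∑ ℓ ∈ Finset.range L, ε ℓ * ∏ ℓ' ∈ Finset.Ico (ℓ + 1) L, s ℓ' + ε L := by
          gcongr
      _ = ∑ ℓ ∈ Finset.range (L + 1), ε ℓ * ∏ ℓ' ∈ Finset.Ico (ℓ + 1) (L + 1), s ℓ' := by
          rw [Finset.sum_range_succ, Finset.mul_sum, Finset.Ico_self, Finset.prod_empty, mul_one]
          congr 1
          refine Finset.sum_congr rfl fun ℓ hℓ => ?_
          rw [Finset.prod_Ico_succ_top (Finset.mem_range.mp hℓ)]
          ring

theorem LipschitzWith.norm_apply_sub_apply_le {𝕜 E G F : Type*} [NontriviallyNormedField 𝕜]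
    [SeminormedAddCommGroup E] [SeminormedAddCommGroup G] [NormedSpace 𝕜 G]
    [SeminormedAddCommGroup F] [NormedSpace 𝕜 F]
    {K : NNReal} {f : E → G} (hf : LipschitzWith K f) (T T' : G →L[𝕜] F) (u u' : E) :
    ‖T (f u) - T' (f u')‖ ≤ ‖T‖ * (K * ‖u - u'‖) + ‖T (f u') - T' (f u')‖ := by
  calc ‖T (f u) - T' (f u')‖ ≤ ‖T (f u) - T (f u')‖ + ‖T (f u') - T' (f u')‖ :=
        norm_sub_le_norm_sub_add_norm_sub _ _ _
    _ ≤ ‖T‖ * (K * ‖u - u'‖) + ‖T (f u') - T' (f u')‖ := by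
        rw [← map_sub]
        gcongr
        refine (T.le_opNorm _).trans ?_
        gcongr
        simpa only [dist_eq_norm] using hf.dist_le_mul u u'

theorem norm_fwd_succ_sub_le {h : ℕ → ℕ}
    {σ : ∀ i : ℕ, EuclideanSpace ℝ (Fin (h i)) → EuclideanSpace ℝ (Fin (h i))}
    (hσlip : ∀ i, LipschitzWith 1 (σ i))
    (A A' : ∀ ℓ : ℕ, EuclideanSpace ℝ (Fin (h ℓ)) →L[ℝ] EuclideanSpace ℝ (Fin (h (ℓ + 1))))
    (x : EuclideanSpace ℝ (Fin (h 0))) (ℓ : ℕ) :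
    ‖fwd h σ A x (ℓ + 1) - fwd h σ A' x (ℓ + 1)‖ ≤ ‖A ℓ‖ * ‖fwd h σ A x ℓ - fwd h σ A' x ℓ‖
      + ‖A ℓ (σ ℓ (fwd h σ A' x ℓ)) - A' ℓ (σ ℓ (fwd h σ A' x ℓ))‖ := by
  simpa only [fwd, NNReal.coe_one, one_mul] using
    (hσlip ℓ).norm_apply_sub_apply_le (A ℓ) (A' ℓ) (fwd h σ A x ℓ) (fwd h σ A' x ℓ)

theorem network_perturbation_bound_general
    (L : ℕ) (h : ℕ → ℕ)
    (σ : ∀ i : ℕ, EuclideanSpace ℝ (Fin (h i)) → EuclideanSpace ℝ (Fin (h i)))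
    (hσlip : ∀ i, LipschitzWith 1 (σ i))
    (A A' : ∀ ℓ : ℕ, EuclideanSpace ℝ (Fin (h ℓ)) →L[ℝ] EuclideanSpace ℝ (Fin (h (ℓ + 1))))
    (s : ℕ → ℝ)
    (hA : ∀ ℓ, ‖A ℓ‖ ≤ s ℓ)
    (x : EuclideanSpace ℝ (Fin (h 0)))
    (ε : ℕ → ℝ)
    (hε : ∀ ℓ < L, ‖A ℓ (σ ℓ (fwd h σ A' x ℓ)) - A' ℓ (σ ℓ (fwd h σ A' x ℓ))‖ ≤ ε ℓ) :
    ‖fwd h σ A x L - fwd h σ A' x L‖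
      ≤ ∑ ℓ ∈ Finset.range L, ε ℓ * ∏ ℓ' ∈ Finset.Ico (ℓ + 1) L, s ℓ' := by
  refine le_sum_mul_prod_Ico_of_le_mul_add (d := fun ℓ => ‖fwd h σ A x ℓ - fwd h σ A' x ℓ‖)
    (by simp [fwd]) fun n hn => ⟨(norm_nonneg _).trans (hA n), ?_⟩
  calc _ ≤ _ := norm_fwd_succ_sub_le hσlip A A' x n
    _ ≤ s n * ‖fwd h σ A x n - fwd h σ A' x n‖ + ε n := by
        gcongr
        · exact hA n
        · exact hε n hn

/-- for two networks with 1-Lipschitz activations (`σ 0 = id`: no activation on the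
input, `σ i 0 = 0`), spectral norm bounds `‖A_ℓ‖, ‖A'_ℓ‖ ≤ s_ℓ`, and layerwise discrepancies
`‖(A_ℓ - A'_ℓ)(σ_ℓ F'_ℓ(X))‖ ≤ ε_ℓ` evaluated at the primed partial outputs, the full outputs
differ by at most `∑_ℓ ε_ℓ ∏_{ℓ' > ℓ} s_{ℓ'}`. -/
theorem network_perturbation_bound
    (L : ℕ) (h : ℕ → ℕ)
    (σ : ∀ i : ℕ, EuclideanSpace ℝ (Fin (h i)) → EuclideanSpace ℝ (Fin (h i)))
    (hσ0 : σ 0 = id)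
    (hσlip : ∀ i, LipschitzWith 1 (σ i))
    (hσzero : ∀ i, σ i 0 = 0)
    (A A' : ∀ ℓ : ℕ, EuclideanSpace ℝ (Fin (h ℓ)) →L[ℝ] EuclideanSpace ℝ (Fin (h (ℓ + 1))))
    (s : ℕ → ℝ) (hs : ∀ ℓ, 0 ≤ s ℓ)
    (hA : ∀ ℓ, ‖A ℓ‖ ≤ s ℓ) (hA' : ∀ ℓ, ‖A' ℓ‖ ≤ s ℓ)
    (x : EuclideanSpace ℝ (Fin (h 0)))
    (ε : ℕ → ℝ)
    (hε : ∀ ℓ < L, ‖A ℓ (σ ℓ (fwd h σ A' x ℓ)) - A' ℓ (σ ℓ (fwd h σ A' x ℓ))‖ ≤ ε ℓ) :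
    ‖fwd h σ A x L - fwd h σ A' x L‖
      ≤ ∑ ℓ ∈ Finset.range L, ε ℓ * ∏ ℓ' ∈ Finset.Ico (ℓ + 1) L, s ℓ' :=
  network_perturbation_bound_general L h σ hσlip A A' s hA x ε hε
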